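/- Let 0 ≤ α ≤ 652 and let Q(x,y) = (x⁴−y⁴)^α(x⁸+14x⁴y⁴+y⁸)² over the rationals. If the coefficient of (x⁴)^{α+4−i}(−y⁴)^i in Q vanishes for some i with 0 ≤ i ≤ (α+4)/2, then (α, i) = (28, 1). -/

import Mathlib

/-!
Put `s = x⁴`, `t = -y⁴`, so that `Q = (s + t)^α (s⁴ - 28 s³t + 198 s²t² - 28 st³ + t⁴)`.
For `a + b = α + 4` the coefficient `c` of `sᵃ tᵇ` satisfies `a! b! c = α! D(a, b)`, where
`D(a, b) = Σⱼ cⱼ a⁽⁴⁻ʲ⁾ b⁽ʲ⁾` (falling factorials, `cⱼ` the coefficients of the quartic)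
is a polynomial in `a, b`: this follows from Pascal's rule by induction on `α`, because
`(a + b - 4) D(a, b) = a D(a - 1, b) + b D(a, b - 1)`. So the coefficient vanishes exactly when
`D(α + 4 - i, i) = 0`, and for `α ≤ 652` this happens only at `(α, i) = (28, 1)`, which the
kernel checks by evaluating `D` at the roughly `10⁵` relevant points.
-/

open MvPolynomial

noncomputable abbrev Qpoly2 (α : ℕ) : MvPolynomial (Fin 2) ℚ :=
  ((X 0)^4 - (X 1)^4)^α * ((X 0)^8 + 14 * (X 0)^4 * (X 1)^4 + (X 1)^8)^2

open scoped Nat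

section ReducedCoeff

variable {R : Type*} [CommRing R]

def reducedCoeff (a b : R) : R :=
  a * (a - 1) * (a - 2) * (a - 3) - 28 * a * (a - 1) * (a - 2) * b
    + 198 * a * (a - 1) * b * (b - 1) - 28 * a * b * (b - 1) * (b - 2)
    + b * (b - 1) * (b - 2) * (b - 3)

theorem reducedCoeff_pascal (a b : R) :
    (a + b - 4) * reducedCoeff a b = a * reducedCoeff (a - 1) b + b * reducedCoeff a (b - 1) := by
  unfold reducedCoeff
  ring

/-- The kernel evaluates `ℕ`-arithmetic far faster than `ℤ`-arithmetic, so `reducedCoeff` is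
split into its positive and negative parts. Truncated subtraction is harmless here: each product
of falling factors contains the factor `0` as soon as the true value is `0`. -/
def reducedCoeffPos (a b : ℕ) : ℕ :=
  a * (a - 1) * (a - 2) * (a - 3) + 198 * a * (a - 1) * b * (b - 1) + b * (b - 1) * (b - 2) * (b - 3)

def reducedCoeffNeg (a b : ℕ) : ℕ :=
  28 * a * (a - 1) * (a - 2) * b + 28 * a * b * (b - 1) * (b - 2)

theorem reducedCoeff_natCast (a b : ℕ) :
    reducedCoeff (a : R) b = reducedCoeffPos a b - reducedCoeffNeg a b := by
  rcases a with _ | _ | _ | a <;> rcases b with _ | _ | _ | b <;>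
    simp [reducedCoeff, reducedCoeffPos, reducedCoeffNeg] <;> ring

end ReducedCoeff

theorem reducedCoeffPos_bne_reducedCoeffNeg :
    ((List.range 653).all fun α => (List.range (α / 2 + 3)).all fun i =>
      reducedCoeffPos (α + 4 - i) i != reducedCoeffNeg (α + 4 - i) i || (α == 28 && i == 1)) =
      true := by
  decide +kernel

theorem eq_of_reducedCoeff_eq_zero {α i : ℕ} (hα : α ≤ 652) (hi : 2 * i ≤ α + 4)
    (h : reducedCoeff ((α + 4 - i : ℕ) : ℚ) i = 0) : α = 28 ∧ i = 1 := by
  have hcheck := reducedCoeffPos_bne_reducedCoeffNeg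
  simp only [List.all_eq_true, List.mem_range] at hcheck
  rw [reducedCoeff_natCast, sub_eq_zero, Nat.cast_inj] at h
  simpa [h] using hcheck α (by omega) i (by omega)

section MvPolynomial

variable {σ : Type*}

theorem single_add_single_inj_of_ne {i j : σ} (hij : i ≠ j) {a b c d : ℕ} :
    Finsupp.single i a + Finsupp.single j b = Finsupp.single i c + Finsupp.single j d ↔
      a = c ∧ b = d := by
  refine ⟨fun h => ⟨?_, ?_⟩, fun ⟨hac, hbd⟩ => hac ▸ hbd ▸ rfl⟩
  · simpa [hij.symm] using DFunLike.congr_fun h i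
  · simpa [hij] using DFunLike.congr_fun h j

theorem monomial_single_add_single {R : Type*} [CommSemiring R] (i j : σ) (a b : ℕ) (c : R) :
    monomial (Finsupp.single i a + Finsupp.single j b) c = C c * X i ^ a * X j ^ b := by
  rw [X_pow_eq_monomial, X_pow_eq_monomial, C_mul_monomial, monomial_mul, mul_one, mul_one]

theorem coeff_X_pow_sub_X_pow_mul {R : Type*} [CommRing R] (p : MvPolynomial σ R) {i j : σ} (hij : i ≠ j) {n : ℕ}
    (hn : 0 < n) (a b : ℕ) :
    coeff (Finsupp.single i (n * a) + Finsupp.single j (n * b)) ((X i ^ n - X j ^ n) * p) =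
      (if a = 0 then 0 else coeff (Finsupp.single i (n * (a - 1)) + Finsupp.single j (n * b)) p) -
      (if b = 0 then 0 else coeff (Finsupp.single i (n * a) + Finsupp.single j (n * (b - 1))) p) := by
  rw [sub_mul, coeff_sub, X_pow_eq_monomial, X_pow_eq_monomial, coeff_monomial_mul',
    coeff_monomial_mul']
  congr 1
  · rcases a with _ | a
    · simp [Finsupp.single_le_iff, hij.symm, hn.ne']
    · rw [if_pos (by simpa [Finsupp.single_le_iff, hij.symm] using Nat.le_mul_of_pos_right n a.succ_pos),
        one_mul, if_neg a.succ_ne_zero, Nat.mul_succ, Finsupp.single_add, add_right_comm,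
        add_tsub_cancel_right, add_tsub_cancel_right]
  · rcases b with _ | b
    · simp [Finsupp.single_le_iff, hij, hn.ne']
    · rw [if_pos (by simpa [Finsupp.single_le_iff, hij] using Nat.le_mul_of_pos_right n b.succ_pos),
        one_mul, if_neg b.succ_ne_zero, Nat.mul_succ, Finsupp.single_add, ← add_assoc,
        add_tsub_cancel_right, add_tsub_cancel_right]

end MvPolynomial

theorem factorial_mul_factorial_mul_coeff_Qpoly2 (α a b : ℕ) (h : a + b = α + 4) :
    (a ! * b ! : ℚ) * coeff (Finsupp.single 0 (4 * a) + Finsupp.single 1 (4 * b)) (Qpoly2 α) =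
      (-1) ^ b * α ! * reducedCoeff (a : ℚ) b := by
  induction α generalizing a b with
  | zero =>
    have hquartic : Qpoly2 0 =
        monomial (Finsupp.single 0 (4 * 4) + Finsupp.single 1 (4 * 0)) 1 +
        monomial (Finsupp.single 0 (4 * 3) + Finsupp.single 1 (4 * 1)) 28 +
        monomial (Finsupp.single 0 (4 * 2) + Finsupp.single 1 (4 * 2)) 198 +
        monomial (Finsupp.single 0 (4 * 1) + Finsupp.single 1 (4 * 3)) 28 +
        monomial (Finsupp.single 0 (4 * 0) + Finsupp.single 1 (4 * 4)) 1 := by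
      simp only [monomial_single_add_single, map_one, map_ofNat]
      ring
    have hb : b ≤ 4 := by omega
    obtain rfl : a = 4 - b := by omega
    simp only [hquartic, coeff_add, coeff_monomial, single_add_single_inj_of_ne zero_ne_one]
    interval_cases b <;> norm_num [reducedCoeff, Nat.factorial]
  | succ α ih =>
    have hQ : Qpoly2 (α + 1) = (X 0 ^ 4 - X 1 ^ 4) * Qpoly2 α := by
      simp only [Qpoly2, pow_succ]
      ring
    rw [hQ, coeff_X_pow_sub_X_pow_mul _ zero_ne_one (by norm_num)]
    rcases a with _ | a <;> rcases b with _ | b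
    · omega
    · obtain rfl : b = α + 4 := by omega
      have ih0 := ih 0 (α + 4) (by omega)
      have key := reducedCoeff_pascal (0 : ℚ) ((α + 4 : ℕ) + 1)
      simp only [if_true, Nat.add_one_ne_zero, if_false, add_tsub_cancel_right] at key ⊢
      push_cast [Nat.factorial_succ] at ih0 key ⊢
      linear_combination (-((α : ℚ) + 4 + 1)) * ih0 + (-1) ^ (α + 4) * α ! * key
    · obtain rfl : a = α + 4 := by omega
      have ih0 := ih (α + 4) 0 (by omega)
      have key := reducedCoeff_pascal ((α + 4 : ℕ) + 1 : ℚ) 0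
      simp only [if_true, Nat.add_one_ne_zero, if_false, add_tsub_cancel_right] at key ⊢
      push_cast [Nat.factorial_succ] at ih0 key ⊢
      linear_combination ((α : ℚ) + 4 + 1) * ih0 - α ! * key
    · have ih1 := ih a (b + 1) (by omega)
      have ih2 := ih (a + 1) b (by omega)
      have key := reducedCoeff_pascal ((a : ℚ) + 1) ((b : ℚ) + 1)
      rw [add_sub_cancel_right, add_sub_cancel_right] at key
      have hα : (α : ℚ) + 3 = a + b := by exact_mod_cast (by omega : α + 3 = a + b)
      simp only [Nat.add_one_ne_zero, if_false, add_tsub_cancel_right]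
      push_cast [Nat.factorial_succ] at ih1 ih2 ⊢
      linear_combination ((a : ℚ) + 1) * ih1 - ((b : ℚ) + 1) * ih2 - (-1) ^ (b + 1) * α ! * key
        - (-1) ^ (b + 1) * α ! * reducedCoeff ((a : ℚ) + 1) ((b : ℚ) + 1) * hα

theorem stmt_6 (α i : ℕ) (hα : α ≤ 652) (hi : 2 * i ≤ α + 4)
    (h : MvPolynomial.coeff
      (Finsupp.single (0 : Fin 2) (4 * (α + 4 - i)) + Finsupp.single (1 : Fin 2) (4 * i))
      (Qpoly2 α) = 0) :
    α = 28 ∧ i = 1 := by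
  have hcoeff := factorial_mul_factorial_mul_coeff_Qpoly2 α (α + 4 - i) i (by omega)
  rw [h, mul_zero, eq_comm] at hcoeff
  refine eq_of_reducedCoeff_eq_zero hα hi ?_
  simpa [Nat.factorial_ne_zero] using hcoeff
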